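/- arXiv:1008.3470 — 2 statements merged into one kernel-verified Lean document; each statement's English description precedes it below -/
import Mathlib

section
/- Let G be a group acting 3-discontinuously and 2-cocompactly on a compactum T. Then G is finitely generated if and only if there exists a G-finite set A of entourages of T whose graph of entourages Γ_A is connected. -/
namespace RHG

/-- Triples with pairwise distinct components. -/
def distinct3 {X : Type*} : Set (X × X × X) :=
  {x | x.1 ≠ x.2.1 ∧ x.1 ≠ x.2.2 ∧ x.2.1 ≠ x.2.2}

/-- Pairs with distinct components. -/
def distinct2 {X : Type*} : Set (X × X) := {x | x.1 ≠ x.2}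

/-- The action `act` of `G` on `X` is 3-discontinuous: the induced action on the space of
(ordered) triples of pairwise distinct points is properly discontinuous. -/
def ThreeDisc {G X : Type*} [TopologicalSpace X] (act : G → X → X) : Prop :=
  ∀ K : Set (X × X × X), IsCompact K → K ⊆ distinct3 →
    Set.Finite {g : G |
      (((fun x : X × X × X => (act g x.1, act g x.2.1, act g x.2.2)) '' K) ∩ K).Nonempty}

/-- The action `act` of `G` on `X` is 2-cocompact: the action on the space of (ordered) pairs
of distinct points is cocompact. -/
def TwoCocompact {G X : Type*} [TopologicalSpace X] (act : G → X → X) : Prop :=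
  ∃ K : Set (X × X), IsCompact K ∧ K ⊆ distinct2 ∧
    ∀ x : X × X, x ∈ (distinct2 : Set (X × X)) → ∃ g : G, (act g x.1, act g x.2) ∈ K

/-- `ρ` is an action of the group `G` on `T` by homeomorphisms. -/
structure IsTopAction (G : Type*) [Group G] (T : Type*) [TopologicalSpace T]
    (ρ : G → T ≃ₜ T) : Prop where
  map_one : ρ 1 = Homeomorph.refl T
  map_mul : ∀ g h : G, ρ (g * h) = (ρ h).trans (ρ g)

/-- The stabilizer of a point for an action by homeomorphisms. -/
def actStab {G : Type*} [Group G] {T : Type*} [TopologicalSpace T]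
    (ρ : G → T ≃ₜ T) (hρ : IsTopAction G T ρ) (p : T) : Subgroup G where
  carrier := {g : G | ρ g p = p}
  one_mem' := by
    simp only [Set.mem_setOf_eq, hρ.map_one, Homeomorph.refl_apply, id_eq]
  mul_mem' := by
    intro a b ha hb
    simp only [Set.mem_setOf_eq] at *
    rw [hρ.map_mul, Homeomorph.trans_apply, hb, ha]
  inv_mem' := by
    intro a ha
    simp only [Set.mem_setOf_eq] at *
    have h1 : ρ (a⁻¹ * a) p = ρ a⁻¹ (ρ a p) := by
      rw [hρ.map_mul, Homeomorph.trans_apply]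
    rw [inv_mul_cancel, hρ.map_one, ha] at h1
    simpa using h1.symm

/-- A parabolic point: its stabilizer is infinite and it is the unique fixed point
of its stabilizer. -/
def IsParabolicPt {G : Type*} [Group G] {T : Type*} [TopologicalSpace T]
    (ρ : G → T ≃ₜ T) (hρ : IsTopAction G T ρ) (p : T) : Prop :=
  Set.Infinite ((actStab ρ hρ p : Set G)) ∧
    ∀ q : T, (∀ g ∈ actStab ρ hρ p, ρ g q = q) → q = p

/-- `T` contains at least three points. -/
def HasThreePts (T : Type*) : Prop := ∃ x y z : T, x ≠ y ∧ x ≠ z ∧ y ≠ z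

end RHG

namespace RHG

/-- An entourage of a topological space `T`: a symmetric neighborhood of the diagonal
in `T × T` (identified with a neighborhood of the diagonal in the symmetric square). -/
structure Entourage (T : Type*) [TopologicalSpace T] where
  carrier : Set (T × T)
  symm' : ∀ x y : T, (x, y) ∈ carrier → (y, x) ∈ carrier
  mem_nhds' : ∀ x : T, carrier ∈ nhds (x, x)

variable {T : Type*} [TopologicalSpace T]

/-- A set is `e`-small if its `Δ_e`-diameter is at most 1, i.e. any two of its points
form a pair belonging to `e`. -/
def eSmall (e : Entourage T) (s : Set T) : Prop :=
  ∀ x ∈ s, ∀ y ∈ s, (x, y) ∈ e.carrier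

/-- `Δ_e (x, y) ≤ k` for the maximal metric `Δ_e` with `Δ_e ≤ 1` on pairs of `e`:
there is a chain of length `k` from `x` to `y` with consecutive pairs in `e`. -/
def eDistLE (e : Entourage T) (k : ℕ) (x y : T) : Prop :=
  ∃ c : ℕ → T, c 0 = x ∧ c k = y ∧ ∀ i < k, (c i, c (i + 1)) ∈ e.carrier

/-- Two entourages are unlinked if `T` is the union of an `a`-small and a `b`-small set. -/
def EntUnlinked (a b : Entourage T) : Prop :=
  ∃ sa sb : Set T, eSmall a sa ∧ eSmall b sb ∧ sa ∪ sb = Set.univ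

/-- Two entourages are linked if they are not unlinked. -/
def EntLinked (a b : Entourage T) : Prop := ¬ EntUnlinked a b

/-- Standing convention on entourages: self-linked, and `Δ_e`-diameter of `T` greater
than `4`. -/
def GoodEnt (e : Entourage T) : Prop :=
  EntLinked e e ∧ ∃ x y : T, ¬ eDistLE e 4 x y

/-- The shadow `sh_a b`: the intersection of all `a`-small sets with `b`-small complement. -/
def shadow (a b : Entourage T) : Set T :=
  ⋂₀ {s : Set T | eSmall a s ∧ eSmall b sᶜ}

/-- The betweenness relation `a − b − c (k)`:
`a ⋈ b ⋈ c` and `Δ_b(sh_b a, sh_b c) > k`. -/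
def Btw (a b c : Entourage T) (k : ℕ) : Prop :=
  EntUnlinked a b ∧ EntUnlinked b c ∧
    ∀ x ∈ shadow b a, ∀ y ∈ shadow b c, ¬ eDistLE b k x y

/-- The betweenness relation `a − b − p (k)` for a point `p ∈ T`:
`a ⋈ b` and `Δ_b(sh_b a, b₀) > k` for every `b`-small neighborhood `b₀` of `p`. -/
def BtwP (a b : Entourage T) (p : T) (k : ℕ) : Prop :=
  EntUnlinked a b ∧
    ∀ s : Set T, eSmall b s → s ∈ nhds p → ∀ x ∈ shadow b a, ∀ y ∈ s, ¬ eDistLE b k x y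

/-- The betweenness relation `p − b − q (k)` for points `p, q ∈ T`:
`Δ_b(b₁, b₂) > k` for all `b`-small neighborhoods `b₁` of `p` and `b₂` of `q`. -/
def BtwPP (p : T) (b : Entourage T) (q : T) (k : ℕ) : Prop :=
  ∀ s₁ s₂ : Set T, eSmall b s₁ → s₁ ∈ nhds p → eSmall b s₂ → s₂ ∈ nhds q →
    ∀ x ∈ s₁, ∀ y ∈ s₂, ¬ eDistLE b k x y

/-- The image of an entourage under a homeomorphism of `T`. -/
def entMap (φ : T ≃ₜ T) (e : Entourage T) : Entourage T where
  carrier := (fun x : T × T => ((φ.symm x.1 : T), (φ.symm x.2 : T))) ⁻¹' e.carrier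
  symm' := fun x y h => e.symm' _ _ h
  mem_nhds' := fun x => by
    have hcont : Continuous fun x : T × T => ((φ.symm x.1 : T), (φ.symm x.2 : T)) :=
      (φ.symm.continuous.comp continuous_fst).prodMk (φ.symm.continuous.comp continuous_snd)
    exact hcont.continuousAt.preimage_mem_nhds (e.mem_nhds' (φ.symm x))

/-- The orbit of an entourage under an action of `G` on `T` by homeomorphisms. -/
def entOrbit {G : Type*} [Group G] (ρ : G → T ≃ₜ T) (a₀ : Entourage T) :
    Set (Entourage T) :=
  {e | ∃ g : G, e = entMap (ρ g) a₀}

/-- A set of entourages is discrete if every entourage is linked with only finitely many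
of its elements. -/
def DiscreteEnts (A : Set (Entourage T)) : Prop :=
  ∀ w : Entourage T, Set.Finite {a ∈ A | EntLinked a w}

/-- `d_A(a, b) ≤ n` in the graph of entourages: there is a walk of length `n` in `A`
from `a` to `b` with consecutive vertices linked. -/
def AdistLE (A : Set (Entourage T)) (n : ℕ) (a b : Entourage T) : Prop :=
  ∃ c : ℕ → Entourage T, c 0 = a ∧ c n = b ∧ (∀ i ≤ n, c i ∈ A) ∧
    ∀ i < n, EntLinked (c i) (c (i + 1))

/-- The `d`-neighborhood of a subset `S` inside the graph of entourages on `A`. -/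
def Anbhd (A : Set (Entourage T)) (d : ℕ) (S : Set (Entourage T)) : Set (Entourage T) :=
  {a ∈ A | ∃ b ∈ S, AdistLE A d a b}

/-- The horosphere `T_{A,k}(p)`: the entourages of `A` which are not separated
from `p` by any element of `A`. -/
def horosphere (A : Set (Entourage T)) (k : ℕ) (p : T) : Set (Entourage T) :=
  {e ∈ A | ¬ ∃ a ∈ A, BtwP e a p k}

/-- `Ψ_k(a,b) = {c ∈ A : a − c − b (k)}`. -/
def Psi (A : Set (Entourage T)) (k : ℕ) (a b : Entourage T) : Set (Entourage T) :=
  {c ∈ A | Btw a c b k}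

/-- The topology on `T̃ = T ⊔ A`, generated by the singletons of elements of `A` and
the convex hulls `õ = o ∪ {e ∈ A : oᶜ is e-small}` of open sets `o ⊆ T`. -/
def tildeTop (A : Set (Entourage T)) : TopologicalSpace (T ⊕ ↥A) :=
  TopologicalSpace.generateFrom
    ({s | ∃ e : ↥A, s = {Sum.inr e}} ∪
      {s | ∃ o : Set T, IsOpen o ∧
        s = Sum.inl '' o ∪ Sum.inr '' {e : ↥A | eSmall (↑e) oᶜ}})

/-- The set of accumulation points of a set `S` in a topological space. -/
def accPts {X : Type*} [TopologicalSpace X] (S : Set X) : Set X :=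
  {x | x ∈ closure (S \ {x})}

/-- The extension of the action of `G` on `T` to `T̃ = T ⊔ A`. -/
def tildeAct {G : Type*} [Group G] (ρ : G → T ≃ₜ T) (A : Set (Entourage T))
    (hinv : ∀ g : G, ∀ a ∈ A, entMap (ρ g) a ∈ A) (g : G) :
    T ⊕ ↥A → T ⊕ ↥A :=
  fun x => match x with
  | Sum.inl t => Sum.inl (ρ g t)
  | Sum.inr e => Sum.inr ⟨entMap (ρ g) ↑e, hinv g (↑e) e.2⟩

/-- The `m`-separation property for a set of entourages. -/
def Separates (A : Set (Entourage T)) (m : ℕ) : Prop :=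
  ∀ p q : T, p ≠ q → ∃ a ∈ A, BtwPP p a q m

/-- `A` generates the filter of entourages. -/
def GeneratesFilter (A : Set (Entourage T)) : Prop :=
  ∀ u : Entourage T, ∃ (n : ℕ) (f : Fin n → Entourage T),
    (∀ i, f i ∈ A) ∧ (⋂ i, (f i).carrier) ⊆ u.carrier

/-- `γ` restricted to the integer interval `[i, j]` is a `c`-quasigeodesic of the graph
of entourages on `A`. -/
def IsQGOn (A : Set (Entourage T)) (c : ℝ) (i j : ℕ) (γ : ℕ → Entourage T) : Prop :=
  ∀ s t : ℕ, i ≤ s → s ≤ j → i ≤ t → t ≤ j →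
    (∀ m : ℕ, AdistLE A m (γ s) (γ t) → (1 / c) * |(s : ℝ) - (t : ℝ)| - c < (m : ℝ)) ∧
    ∃ m : ℕ, AdistLE A m (γ s) (γ t) ∧ (m : ℝ) ≤ c * |(s : ℝ) - (t : ℝ)| + c

/-- `γ : [0, n] → A` is a `c`-quasigeodesic of the graph of entourages on `A`. -/
def IsQG (A : Set (Entourage T)) (c : ℝ) (n : ℕ) (γ : ℕ → Entourage T) : Prop :=
  (∀ i ≤ n, γ i ∈ A) ∧ IsQGOn A c 0 n γ

/-- `γ : [0, n] → A` is a curve (edge-path) in the graph of entourages on `A`. -/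
def IsCurve (A : Set (Entourage T)) (n : ℕ) (γ : ℕ → Entourage T) : Prop :=
  (∀ i ≤ n, γ i ∈ A) ∧ ∀ i < n, EntLinked (γ i) (γ (i + 1))

/-- `γ : [0, n] → A` is an `(l, c)`-tight curve (with horosphere parameter `k` and
neighborhood radius `r`): every subinterval of length at most `l` is a `c`-quasigeodesic,
and if more than `l` points of the image of a subinterval lie in the `r`-neighborhood of
a horosphere of a parabolic point, then the endpoints of the subinterval are at
`d_A`-distance greater than `l/c − c`. -/
def IsTight (A : Set (Entourage T)) (k l : ℕ) (c : ℝ) (r n : ℕ)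
    (γ : ℕ → Entourage T) : Prop :=
  IsCurve A n γ ∧
  (∀ i j : ℕ, i ≤ j → j ≤ n → j - i ≤ l → IsQGOn A c i j γ) ∧
  (∀ i j : ℕ, i ≤ j → j ≤ n → ∀ p : T, (horosphere A k p).Infinite →
    l < Set.ncard ((γ '' Set.Icc i j) ∩ Anbhd A r (horosphere A k p)) →
    ∀ m : ℕ, AdistLE A m (γ i) (γ j) → (l : ℝ) / c - c < (m : ℝ))

/-- The vertex `γ i` of the curve `γ` is `d`-horospherical (with constant `e`): `γ`
contains subsegments `[i₁, i]` and `[i, i₂]` of length greater than `e` lying in the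
`d`-neighborhood of the horosphere of a parabolic point. -/
def IsHoroVertex (A : Set (Entourage T)) (k d e n : ℕ) (γ : ℕ → Entourage T)
    (i : ℕ) : Prop :=
  ∃ (p : T) (i₁ i₂ : ℕ), (horosphere A k p).Infinite ∧ i₁ ≤ i ∧ i ≤ i₂ ∧ i₂ ≤ n ∧
    e < i - i₁ ∧ e < i₂ - i ∧
    ∀ m : ℕ, i₁ ≤ m → m ≤ i₂ → γ m ∈ Anbhd A d (horosphere A k p)

end RHG

/-!
If `S` generates `G` and `a₀` is a good entourage, each meet `a₀ ⊓ s a₀` (`s ∈ S`) is linked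
with both `a₀` and `s a₀`, so the `G`-orbit `A` of `{a₀} ∪ {a₀ ⊓ s a₀ : s ∈ S}` has a connected
graph `Γ_A`. Conversely, if `Γ_A` is connected for `A = G F` with `F` finite, a path from `f₀` to
`g f₀` writes `g` as a product of elements `h` for which some `f ∈ F` is linked with some `h f'`,
`f' ∈ F`. There are finitely many such `h` by the Dynkin property, which holds because a
3-discontinuous action is a convergence action.
-/

namespace RHG

open Filter Set Topology Uniformity

variable {T : Type*} [TopologicalSpace T] {G : Type*} {ρ : G → T ≃ₜ T}

section Entourages

lemma eSmall.mono {a b : Entourage T} {s : Set T} (h : eSmall a s)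
    (hab : a.carrier ⊆ b.carrier) : eSmall b s :=
  fun x hx y hy => hab (h x hx y hy)

lemma eDistLE.mono {a b : Entourage T} {k : ℕ} {x y : T} (h : eDistLE a k x y)
    (hab : a.carrier ⊆ b.carrier) : eDistLE b k x y :=
  let ⟨c, hc0, hck, hc⟩ := h
  ⟨c, hc0, hck, fun i hi => hab (hc i hi)⟩

lemma EntUnlinked.symm {a b : Entourage T} (h : EntUnlinked a b) : EntUnlinked b a :=
  let ⟨sa, sb, hsa, hsb, hu⟩ := h
  ⟨sb, sa, hsb, hsa, by rw [union_comm, hu]⟩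

lemma EntLinked.symm {a b : Entourage T} (h : EntLinked a b) : EntLinked b a :=
  fun hu => h hu.symm

lemma EntLinked.mono_left {a a' b : Entourage T} (h : EntLinked a b)
    (ha : a'.carrier ⊆ a.carrier) : EntLinked a' b :=
  fun ⟨sa, sb, hsa, hsb, hu⟩ => h ⟨sa, sb, hsa.mono ha, hsb, hu⟩

lemma GoodEnt.mono {a b : Entourage T} (h : GoodEnt a) (hba : b.carrier ⊆ a.carrier) :
    GoodEnt b :=
  let ⟨hl, x, y, hxy⟩ := h
  ⟨(hl.mono_left hba).symm.mono_left hba, x, y, fun hb => hxy (hb.mono hba)⟩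

lemma entLinked_self_of_notMem {e : Entourage T} {x y z : T} (hxy : (x, y) ∉ e.carrier)
    (hxz : (x, z) ∉ e.carrier) (hyz : (y, z) ∉ e.carrier) : EntLinked e e := by
  rintro ⟨s₁, s₂, h₁, h₂, hu⟩
  have hcover : ∀ t, t ∈ s₁ ∨ t ∈ s₂ := fun t => (hu ▸ mem_univ t : t ∈ s₁ ∪ s₂)
  rcases hcover x with hx | hx <;> rcases hcover y with hy | hy <;>
    rcases hcover z with hz | hz <;>
    first
      | exact hxy (h₁ x hx y hy) | exact hxy (h₂ x hx y hy)
      | exact hxz (h₁ x hx z hz) | exact hxz (h₂ x hx z hz)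
      | exact hyz (h₁ y hy z hz) | exact hyz (h₂ y hy z hz)

lemma Entourage.exists_mem_nhds_eSmall (e : Entourage T) (t : T) :
    ∃ V ∈ 𝓝 t, eSmall e V := by
  obtain ⟨V, hV, hVe⟩ := mem_prod_self_iff.1 (nhds_prod_eq (x := t) (y := t) ▸ e.mem_nhds' t)
  exact ⟨V, hV, fun x hx y hy => hVe ⟨hx, hy⟩⟩

lemma exists_goodEnt [CompactSpace T] [T2Space T] (h3 : HasThreePts T) :
    ∃ e : Entourage T, GoodEnt e := by
  -- `V ○ V ○ V ○ V` misses the pairs of distinct points among `x, y, z`: no two of them lie in a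
  -- common `V`-small set, and no 4-chain of `V` joins `x` to `y`
  let := uniformSpaceOfCompactR1 (γ := T)
  obtain ⟨x, y, z, hxy, hxz, hyz⟩ := h3
  have hU : ({x, y, z} : Set T).offDiagᶜ ∈ 𝓤 T := by
    rw [← nhdsSet_diagonal_eq_uniformity]
    refine ((toFinite _).offDiag.isClosed.isOpen_compl).mem_nhdsSet.2 ?_
    rintro ⟨s, t⟩ (rfl : s = t) ⟨-, -, h⟩
    exact h rfl
  obtain ⟨W, hW, -, hWU⟩ := comp_symm_mem_uniformity_sets hU
  obtain ⟨V, hV, hVsymm, hVW⟩ := comp_symm_mem_uniformity_sets hW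
  have hVU : V ⊆ ({x, y, z} : Set T).offDiagᶜ :=
    (subset_comp_self_of_mem_uniformity hV).trans (hVW.trans
      ((subset_comp_self_of_mem_uniformity hW).trans hWU))
  have hfar : ∀ a ∈ ({x, y, z} : Set T), ∀ b ∈ ({x, y, z} : Set T), a ≠ b → (a, b) ∉ V :=
    fun a ha b hb hab hV => hVU hV ⟨ha, hb, hab⟩
  let e : Entourage T :=
    ⟨V, fun a b h => hVsymm.symm a b h, fun t => nhds_le_uniformity t hV⟩
  refine ⟨e, entLinked_self_of_notMem (hfar x (by simp) y (by simp) hxy)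
    (hfar x (by simp) z (by simp) hxz) (hfar y (by simp) z (by simp) hyz), x, y, ?_⟩
  rintro ⟨c, rfl, rfl, hc⟩
  have h02 : (c 0, c 2) ∈ W :=
    hVW (SetRel.prodMk_mem_comp (hc 0 (by norm_num)) (hc 1 (by norm_num)))
  have h24 : (c 2, c 4) ∈ W :=
    hVW (SetRel.prodMk_mem_comp (hc 2 (by norm_num)) (hc 3 (by norm_num)))
  exact hWU (SetRel.prodMk_mem_comp h02 h24) ⟨by simp, by simp, hxy⟩

end Entourages

section EntMap

variable {φ : T ≃ₜ T}

lemma entMap_trans (φ ψ : T ≃ₜ T) (e : Entourage T) :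
    entMap φ (entMap ψ e) = entMap (ψ.trans φ) e := rfl

lemma entMap_refl (e : Entourage T) : entMap (Homeomorph.refl T) e = e := rfl

lemma entMap_symm_entMap (φ : T ≃ₜ T) (e : Entourage T) : entMap φ.symm (entMap φ e) = e := by
  rw [entMap_trans, Homeomorph.self_trans_symm, entMap_refl]

lemma apply_mem_entMap_iff {e : Entourage T} {x y : T} :
    (φ x, φ y) ∈ (entMap φ e).carrier ↔ (x, y) ∈ e.carrier := by
  simp only [entMap, mem_preimage, Homeomorph.symm_apply_apply]

lemma eSmall.image {e : Entourage T} {s : Set T} (h : eSmall e s) :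
    eSmall (entMap φ e) (φ '' s) := by
  rintro _ ⟨x, hx, rfl⟩ _ ⟨y, hy, rfl⟩
  exact apply_mem_entMap_iff.2 (h x hx y hy)

lemma eDistLE.entMap {e : Entourage T} {k : ℕ} {x y : T} (h : eDistLE e k x y) :
    eDistLE (entMap φ e) k (φ x) (φ y) :=
  let ⟨c, hc0, hck, hc⟩ := h
  ⟨φ ∘ c, by simp [hc0], by simp [hck], fun i hi => apply_mem_entMap_iff.2 (hc i hi)⟩

lemma EntUnlinked.entMap {a b : Entourage T} (h : EntUnlinked a b) :
    EntUnlinked (entMap φ a) (entMap φ b) :=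
  let ⟨sa, sb, hsa, hsb, hu⟩ := h
  ⟨φ '' sa, φ '' sb, hsa.image, hsb.image,
    by rw [← image_union, hu, image_univ_of_surjective φ.surjective]⟩

lemma entLinked_entMap_iff {a b : Entourage T} :
    EntLinked (entMap φ a) (entMap φ b) ↔ EntLinked a b := by
  refine not_congr ⟨fun h => ?_, EntUnlinked.entMap⟩
  simpa only [entMap_symm_entMap] using h.entMap (φ := φ.symm)

lemma GoodEnt.entMap {e : Entourage T} (h : GoodEnt e) : GoodEnt (entMap φ e) := by
  obtain ⟨hl, x, y, hxy⟩ := h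
  refine ⟨entLinked_entMap_iff.2 hl, φ x, φ y, fun hφ => hxy ?_⟩
  simpa only [entMap_symm_entMap, Homeomorph.symm_apply_apply] using hφ.entMap (φ := φ.symm)

lemma entUnlinked_entMap_of_mapsTo {a b : Entourage T} {V W : Set T} (hV : eSmall a V)
    (hW : eSmall b W) (h : MapsTo φ Wᶜ V) : EntUnlinked a (entMap φ b) := by
  refine ⟨V, φ '' W, hV, hW.image, eq_univ_of_forall fun t => ?_⟩
  by_cases ht : φ.symm t ∈ W
  · exact Or.inr ⟨φ.symm t, ht, φ.apply_symm_apply t⟩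
  · exact Or.inl (φ.apply_symm_apply t ▸ h ht)

end EntMap

section Action

variable [Group G]

lemma IsTopAction.entMap_mul (hρ : IsTopAction G T ρ) (g h : G) (e : Entourage T) :
    entMap (ρ g) (entMap (ρ h) e) = entMap (ρ (g * h)) e := by
  rw [entMap_trans, hρ.map_mul]

lemma IsTopAction.entMap_one (hρ : IsTopAction G T ρ) (e : Entourage T) :
    entMap (ρ 1) e = e := by
  rw [hρ.map_one, entMap_refl]

lemma IsTopAction.apply_inv_apply (hρ : IsTopAction G T ρ) (g : G) (t : T) :
    ρ g (ρ g⁻¹ t) = t := by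
  rw [← Homeomorph.trans_apply, ← hρ.map_mul, mul_inv_cancel, hρ.map_one]
  rfl

end Action

section Graph

variable {A : Set (Entourage T)} {a b c : Entourage T} {m n : ℕ}

lemma AdistLE.refl (ha : a ∈ A) : AdistLE A 0 a a :=
  ⟨fun _ => a, rfl, rfl, fun _ _ => ha, fun _ h => absurd h (Nat.not_lt_zero _)⟩

lemma AdistLE.mem_right (h : AdistLE A n a b) : b ∈ A :=
  let ⟨_, _, hcn, hmem, _⟩ := h
  hcn ▸ hmem n le_rfl

lemma adistLE_zero_iff : AdistLE A 0 a b ↔ a ∈ A ∧ b = a := by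
  refine ⟨fun ⟨c, hc0, hcn, hmem, _⟩ => ⟨hc0 ▸ hmem 0 le_rfl, hcn ▸ hc0⟩, ?_⟩
  rintro ⟨ha, rfl⟩
  exact AdistLE.refl ha

lemma adistLE_succ_iff :
    AdistLE A (n + 1) a c ↔ ∃ b, AdistLE A n a b ∧ c ∈ A ∧ EntLinked b c := by
  constructor
  · rintro ⟨γ, hγ0, hγn, hmem, hlink⟩
    exact ⟨γ n, ⟨γ, hγ0, rfl, fun i hi => hmem i (by omega), fun i hi => hlink i (by omega)⟩,
      hγn ▸ hmem (n + 1) le_rfl, hγn ▸ hlink n (by omega)⟩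
  · rintro ⟨b, ⟨γ, hγ0, hγn, hmem, hlink⟩, hc, hbc⟩
    refine ⟨Function.update γ (n + 1) c, by simp [hγ0], by simp, fun i hi => ?_, fun i hi => ?_⟩
    · rcases eq_or_ne i (n + 1) with rfl | hi'
      · simpa using hc
      · simpa [hi'] using hmem i (by omega)
    · rcases eq_or_ne i n with rfl | hi'
      · simpa [hγn] using hbc
      · simpa [hi', show i ≠ n + 1 by omega] using hlink i (by omega)

lemma AdistLE.single (ha : a ∈ A) (hb : b ∈ A) (hab : EntLinked a b) : AdistLE A 1 a b :=
  adistLE_succ_iff.2 ⟨a, AdistLE.refl ha, hb, hab⟩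

lemma AdistLE.trans (h₁ : AdistLE A m a b) (h₂ : AdistLE A n b c) : AdistLE A (m + n) a c := by
  induction n generalizing c with
  | zero => obtain ⟨-, rfl⟩ := adistLE_zero_iff.1 h₂; exact h₁
  | succ n ih =>
    obtain ⟨b', hb', hc, hlink⟩ := adistLE_succ_iff.1 h₂
    exact adistLE_succ_iff.2 ⟨b', ih hb', hc, hlink⟩

lemma AdistLE.symm (h : AdistLE A n a b) : AdistLE A n b a := by
  induction n generalizing b with
  | zero => obtain ⟨ha, rfl⟩ := adistLE_zero_iff.1 h; exact AdistLE.refl ha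
  | succ n ih =>
    obtain ⟨b', hb', hb, hlink⟩ := adistLE_succ_iff.1 h
    simpa only [add_comm 1 n] using (AdistLE.single hb hb'.mem_right hlink.symm).trans (ih hb')

lemma AdistLE.induction {P : Entourage T → Prop} (h : AdistLE A n a b) (ha : P a)
    (hstep : ∀ b c, b ∈ A → c ∈ A → EntLinked b c → P b → P c) : P b := by
  induction n generalizing b with
  | zero => obtain ⟨-, rfl⟩ := adistLE_zero_iff.1 h; exact ha
  | succ n ih =>
    obtain ⟨b', hb', hb, hlink⟩ := adistLE_succ_iff.1 h
    exact hstep b' b hb'.mem_right hb hlink (ih hb')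

lemma AdistLE.entMap {φ : T ≃ₜ T} (hA : ∀ a ∈ A, entMap φ a ∈ A) (h : AdistLE A n a b) :
    AdistLE A n (entMap φ a) (entMap φ b) :=
  let ⟨γ, hγ0, hγn, hmem, hlink⟩ := h
  ⟨fun i => RHG.entMap φ (γ i), congrArg _ hγ0, congrArg _ hγn, fun i hi => hA _ (hmem i hi),
    fun i hi => entLinked_entMap_iff.2 (hlink i hi)⟩

end Graph

section FiniteGeneration

variable [Group G]

instance : Min (Entourage T) where
  min a b :=
    ⟨a.carrier ∩ b.carrier, fun x y h => ⟨a.symm' x y h.1, b.symm' x y h.2⟩,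
      fun x => inter_mem (a.mem_nhds' x) (b.mem_nhds' x)⟩

lemma IsTopAction.exists_adistLE_entMap_of_closure_eq_top (hρ : IsTopAction G T ρ)
    {A : Set (Entourage T)} (hA : ∀ g : G, ∀ a ∈ A, entMap (ρ g) a ∈ A) {a : Entourage T}
    (ha : a ∈ A) {S : Set G} (hS : Subgroup.closure S = ⊤)
    (hSa : ∀ s ∈ S, ∃ n, AdistLE A n a (entMap (ρ s) a)) (g : G) :
    ∃ n, AdistLE A n a (entMap (ρ g) a) := by
  induction (hS ▸ Subgroup.mem_top g : g ∈ Subgroup.closure S) using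
    Subgroup.closure_induction with
  | mem s hs => exact hSa s hs
  | one => exact ⟨0, by simpa only [hρ.entMap_one] using AdistLE.refl ha⟩
  | mul g h _ _ hg hh =>
    obtain ⟨m, hm⟩ := hg
    obtain ⟨n, hn⟩ := hh
    exact ⟨m + n, hm.trans (by simpa only [hρ.entMap_mul] using hn.entMap (hA g))⟩
  | inv g _ hg =>
    obtain ⟨n, hn⟩ := hg
    refine ⟨n, AdistLE.symm ?_⟩
    simpa only [hρ.entMap_mul, inv_mul_cancel, hρ.entMap_one] using hn.entMap (hA g⁻¹)

theorem exists_connected_of_fg [CompactSpace T] [T2Space T] (h3 : HasThreePts T)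
    (hρ : IsTopAction G T ρ) (hG : Group.FG G) :
    ∃ A : Set (Entourage T), A.Nonempty ∧
      (∀ a ∈ A, GoodEnt a) ∧
      (∀ g : G, ∀ a ∈ A, entMap (ρ g) a ∈ A) ∧
      (∃ F : Set (Entourage T), F.Finite ∧ F ⊆ A ∧
        ∀ a ∈ A, ∃ g : G, ∃ b ∈ F, a = entMap (ρ g) b) ∧
      (∀ a ∈ A, ∀ b ∈ A, ∃ n : ℕ, AdistLE A n a b) := by
  obtain ⟨a₀, ha₀⟩ := exists_goodEnt h3
  obtain ⟨S, hS, hSfin⟩ := Group.fg_iff.1 hG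
  set F : Set (Entourage T) := insert a₀ ((fun s => a₀ ⊓ entMap (ρ s) a₀) '' S)
  set A : Set (Entourage T) := {e | ∃ g : G, ∃ b ∈ F, e = entMap (ρ g) b}
  have hinv : ∀ g : G, ∀ a ∈ A, entMap (ρ g) a ∈ A := by
    rintro g _ ⟨h, b, hb, rfl⟩
    exact ⟨g * h, b, hb, hρ.entMap_mul g h b⟩
  have hFA : F ⊆ A := fun b hb => ⟨1, b, hb, (hρ.entMap_one b).symm⟩
  have ha₀A : a₀ ∈ A := hFA (mem_insert a₀ _)
  have hmeetA : ∀ s ∈ S, a₀ ⊓ entMap (ρ s) a₀ ∈ A := fun s hs =>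
    hFA (mem_insert_of_mem a₀ (mem_image_of_mem _ hs))
  have hmeet_left : ∀ s, EntLinked a₀ (a₀ ⊓ entMap (ρ s) a₀) := fun s =>
    (ha₀.1.mono_left inter_subset_left).symm
  have hmeet_right : ∀ s, EntLinked (a₀ ⊓ entMap (ρ s) a₀) (entMap (ρ s) a₀) := fun s =>
    ha₀.entMap.1.mono_left inter_subset_right
  have hF : ∀ b ∈ F, ∃ n, AdistLE A n a₀ b := by
    rintro b (rfl | ⟨s, hs, rfl⟩)
    · exact ⟨0, AdistLE.refl ha₀A⟩
    · exact ⟨1, AdistLE.single ha₀A (hmeetA s hs) (hmeet_left s)⟩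
  have horbit : ∀ g : G, ∃ n, AdistLE A n a₀ (entMap (ρ g) a₀) :=
    hρ.exists_adistLE_entMap_of_closure_eq_top hinv ha₀A hS fun s hs =>
      ⟨2, (AdistLE.single ha₀A (hmeetA s hs) (hmeet_left s)).trans
        (AdistLE.single (hmeetA s hs) (hinv s a₀ ha₀A) (hmeet_right s))⟩
  have hreach : ∀ a ∈ A, ∃ n, AdistLE A n a₀ a := by
    rintro _ ⟨g, b, hb, rfl⟩
    obtain ⟨m, hm⟩ := horbit g
    obtain ⟨n, hn⟩ := hF b hb
    exact ⟨m + n, hm.trans (hn.entMap (hinv g))⟩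
  refine ⟨A, ⟨a₀, ha₀A⟩, ?_, hinv, ⟨F, (hSfin.image _).insert a₀, hFA, fun a ha => ha⟩, ?_⟩
  · rintro _ ⟨g, b, rfl | ⟨s, -, rfl⟩, rfl⟩
    exacts [ha₀.entMap, (ha₀.mono inter_subset_left).entMap]
  · intro a ha b hb
    obtain ⟨m, hm⟩ := hreach a ha
    obtain ⟨n, hn⟩ := hreach b hb
    exact ⟨m + n, hm.symm.trans hn⟩

end FiniteGeneration

section Convergence

lemma HasThreePts.exists_ne_ne {X : Type*} (h3 : HasThreePts X) (a b : X) :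
    ∃ u : X, u ≠ a ∧ u ≠ b := by
  obtain ⟨x, y, z, hxy, hxz, hyz⟩ := h3
  by_contra! h
  rcases eq_or_ne x a with rfl | hx
  · exact hyz ((h y hxy.symm).trans (h z hxz.symm).symm)
  · rcases eq_or_ne y a with rfl | hy
    · exact hxz ((h x hx).trans (h z hyz.symm).symm)
    · exact hxy ((h x hx).trans (h y hy).symm)

lemma hasThreePts_of_infinite {X : Type*} [Infinite X] : HasThreePts X := by
  obtain ⟨x, y, hxy⟩ := exists_pair_ne X
  obtain ⟨z, hz⟩ := ({x, y} : Set X).toFinite.infinite_compl.nonempty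
  simp only [mem_compl_iff, mem_insert_iff, mem_singleton_iff, not_or] at hz
  exact ⟨x, y, z, hxy, Ne.symm hz.1, Ne.symm hz.2⟩

lemma ThreeDisc.finite_of_finite [Finite T] (h3 : HasThreePts T)
    (h3d : ThreeDisc fun (g : G) (x : T) => ρ g x) : Finite G := by
  obtain ⟨x, y, z, hxy, hxz, hyz⟩ := h3
  refine Set.finite_univ_iff.1 ((h3d _ (toFinite distinct3).isCompact subset_rfl).subset
    fun g _ => ⟨_, ⟨(x, y, z), ⟨hxy, hxz, hyz⟩, rfl⟩, ?_⟩)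
  exact ⟨(ρ g).injective.ne hxy, (ρ g).injective.ne hxz, (ρ g).injective.ne hyz⟩

lemma isOpen_distinct3 [T2Space T] : IsOpen (distinct3 : Set (T × T × T)) :=
  (isOpen_ne_fun continuous_fst continuous_snd.fst).inter
    ((isOpen_ne_fun continuous_fst continuous_snd.snd).inter
      (isOpen_ne_fun continuous_snd.fst continuous_snd.snd))

lemma exists_tendsto_of_ultrafilter [CompactSpace T] {ι : Type*} (𝒰 : Ultrafilter ι)
    (f : ι → T) : ∃ x : T, Tendsto f ↑𝒰 (𝓝 x) :=
  let ⟨x, _, hx⟩ := isCompact_univ.ultrafilter_le_nhds (𝒰.map f) (by simp)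
  ⟨x, hx⟩

variable [CompactSpace T] [T2Space T]

/-- Closed neighbourhoods of `p` and `p'` inside `distinct3` form a compact set that would meet
its translates by `l`-almost all `g`. -/
lemma ThreeDisc.false_of_tendsto (h3d : ThreeDisc fun (g : G) (x : T) => ρ g x)
    {l : Filter G} [l.NeBot] (hl : l ≤ cofinite) {u : G → T × T × T} {p p' : T × T × T}
    (hp : p ∈ distinct3) (hp' : p' ∈ distinct3) (hu : Tendsto u l (𝓝 p))
    (hu' : Tendsto (fun g => (ρ g (u g).1, ρ g (u g).2.1, ρ g (u g).2.2)) l (𝓝 p')) :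
    False := by
  obtain ⟨N, hN, hNc, hN3⟩ := exists_mem_nhds_isClosed_subset (isOpen_distinct3.mem_nhds hp)
  obtain ⟨N', hN', hN'c, hN'3⟩ :=
    exists_mem_nhds_isClosed_subset (isOpen_distinct3.mem_nhds hp')
  have hfin := h3d (N ∪ N') (hNc.union hN'c).isCompact (union_subset hN3 hN'3)
  obtain ⟨g, hg, hg'⟩ := l.nonempty_of_mem
    (inter_mem (inter_mem (hu hN) (hu' hN')) (hl hfin.compl_mem_cofinite))
  exact hg' ⟨_, ⟨u g, Or.inl hg.1, rfl⟩, Or.inr hg.2⟩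

lemma ThreeDisc.eq_of_tendsto_of_ne (h3d : ThreeDisc fun (g : G) (x : T) => ρ g x)
    {l : Filter G} [l.NeBot] (hl : l ≤ cofinite) {p q w p' q' w' : T} (hpq : p ≠ q)
    (hpw : p ≠ w) (hqw : q ≠ w) (hp : Tendsto (fun g => ρ g p) l (𝓝 p'))
    (hq : Tendsto (fun g => ρ g q) l (𝓝 q')) (hw : Tendsto (fun g => ρ g w) l (𝓝 w'))
    (hpq' : p' ≠ q') (hpw' : p' ≠ w') : q' = w' :=
  by_contra fun hqw' => h3d.false_of_tendsto hl (u := fun _ => (p, q, w)) ⟨hpq, hpw, hqw⟩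
    ⟨hpq', hpw', hqw'⟩ tendsto_const_nhds (hp.prodMk_nhds (hq.prodMk_nhds hw))

lemma ThreeDisc.exists_subsingleton_not_tendsto [Group G]
    (h3d : ThreeDisc fun (g : G) (x : T) => ρ g x) (h3 : HasThreePts T) (hρ : IsTopAction G T ρ) {𝒰 : Ultrafilter G}
    (hU : (𝒰 : Filter G) ≤ cofinite) :
    ∃ r : T, {t | ¬ Tendsto (fun g => ρ g t) ↑𝒰 (𝓝 r)}.Subsingleton := by
  choose L hL using fun t => exists_tendsto_of_ultrafilter 𝒰 fun g => ρ g t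
  have key {p q w : T} (hpq : p ≠ q) (hpw : p ≠ w) (hqw : q ≠ w) : L p ≠ L q → L p ≠ L w →
      L q = L w :=
    h3d.eq_of_tendsto_of_ne hU hpq hpw hqw (hL p) (hL q) (hL w)
  obtain ⟨x₁, x₂, hx, hLx⟩ : ∃ x₁ x₂ : T, x₁ ≠ x₂ ∧ L x₁ = L x₂ := by
    obtain ⟨p, q, w, hpq, hpw, hqw⟩ := h3
    by_cases hLpq : L p = L q
    · exact ⟨p, q, hpq, hLpq⟩
    by_cases hLpw : L p = L w
    · exact ⟨p, w, hpw, hLpw⟩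
    exact ⟨q, w, hqw, key hpq hpw hqw hLpq hLpw⟩
  refine ⟨L x₁, fun y₁ hy₁ y₂ hy₂ => by_contra fun hy => ?_⟩
  replace hy₁ : L x₁ ≠ L y₁ := fun h => hy₁ (h ▸ hL y₁)
  replace hy₂ : L x₁ ≠ L y₂ := fun h => hy₂ (h ▸ hL y₂)
  have hLy : L y₁ = L y₂ :=
    key (fun h => hy₁ (h ▸ rfl)) (fun h => hy₂ (h ▸ rfl)) hy hy₁ hy₂
  -- a third point `v` has preimages converging to some `m`; the triple `(x, y, g⁻¹ v)` with
  -- `x ∈ {x₁, x₂}`, `y ∈ {y₁, y₂}` avoiding `m` contradicts 3-discontinuity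
  obtain ⟨v, hv₁, hv₂⟩ := h3.exists_ne_ne (L x₁) (L y₁)
  obtain ⟨m, hm⟩ := exists_tendsto_of_ultrafilter 𝒰 fun g => ρ g⁻¹ v
  obtain ⟨x, hxm, hLx⟩ : ∃ x, x ≠ m ∧ L x = L x₁ := by
    rcases eq_or_ne x₁ m with rfl | h
    · exact ⟨x₂, hx.symm, hLx.symm⟩
    · exact ⟨x₁, h, rfl⟩
  obtain ⟨y, hym, hLy⟩ : ∃ y, y ≠ m ∧ L y = L y₁ := by
    rcases eq_or_ne y₁ m with rfl | h
    · exact ⟨y₂, Ne.symm hy, hLy.symm⟩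
    · exact ⟨y₁, h, rfl⟩
  refine h3d.false_of_tendsto hU (u := fun g => (x, y, ρ g⁻¹ v)) (p' := (L x₁, L y₁, v))
    ⟨fun h => hy₁ (hLx ▸ hLy ▸ congrArg L h), hxm, hym⟩ ⟨hy₁, hv₁.symm, hv₂.symm⟩
    (tendsto_const_nhds.prodMk_nhds (tendsto_const_nhds.prodMk_nhds hm)) ?_
  simp only [hρ.apply_inv_apply]
  exact (hLx ▸ hL x).prodMk_nhds ((hLy ▸ hL y).prodMk_nhds tendsto_const_nhds)

end Convergence

section Dynkin

variable [CompactSpace T] [T2Space T] [Group G]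

/-- The convergence property: an ultrafilter of cofinite type has an attracting point `r` and a
repelling point `s`. -/
lemma ThreeDisc.exists_eventually_mapsTo [Infinite T]
    (h3d : ThreeDisc fun (g : G) (x : T) => ρ g x) (hρ : IsTopAction G T ρ)
    {𝒰 : Ultrafilter G} (hU : (𝒰 : Filter G) ≤ cofinite) :
    ∃ r s : T, ∀ V ∈ 𝓝 r, ∀ W ∈ 𝓝 s, ∀ᶠ g in (𝒰 : Filter G), MapsTo (ρ g) Wᶜ V := by
  have h3 : HasThreePts T := hasThreePts_of_infinite
  have hU' : ((𝒰.map Inv.inv : Ultrafilter G) : Filter G) ≤ cofinite := by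
    rw [Ultrafilter.coe_map]
    exact (map_mono hU).trans inv_injective.tendsto_cofinite
  obtain ⟨r, hr⟩ := h3d.exists_subsingleton_not_tendsto h3 hρ hU
  obtain ⟨s, hs⟩ := h3d.exists_subsingleton_not_tendsto h3 hρ hU'
  refine ⟨r, s, fun V hV W hW => by_contra fun hVW => ?_⟩
  obtain ⟨z, hz⟩ : ∃ z : G → T, ∀ᶠ g in (𝒰 : Filter G), z g ∈ Wᶜ ∧ ρ g (z g) ∈ Vᶜ := by
    refine Eventually.choice (r := fun g t => t ∈ Wᶜ ∧ ρ g t ∈ Vᶜ)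
      ((Ultrafilter.eventually_not.2 hVW).mono fun g hg => ?_)
    simpa [MapsTo] using hg
  obtain ⟨ζ, hζ⟩ := exists_tendsto_of_ultrafilter 𝒰 z
  obtain ⟨ω, hω⟩ := exists_tendsto_of_ultrafilter 𝒰 fun g => ρ g (z g)
  have hζs : ζ ≠ s := by
    rintro rfl
    have := mem_closure_of_tendsto hζ (hz.mono fun _ => And.left)
    rw [closure_compl] at this
    exact this (mem_interior_iff_mem_nhds.2 hW)
  have hωr : ω ≠ r := by
    rintro rfl
    have := mem_closure_of_tendsto hω (hz.mono fun _ => And.right)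
    rw [closure_compl] at this
    exact this (mem_interior_iff_mem_nhds.2 hV)
  -- a point `p` attracted to `r` and a point `u` repelled to `s`, away from the other limits
  obtain ⟨p, hp⟩ := (((toFinite {ζ, s}).union hr.finite).infinite_compl).nonempty
  obtain ⟨u, hu⟩ := (((toFinite {r, ω}).union hs.finite).infinite_compl).nonempty
  simp only [mem_compl_iff, mem_union, mem_insert_iff, mem_singleton_iff, mem_ofPred_eq, not_or,
    not_not, Ultrafilter.coe_map, tendsto_map'_iff] at hp hu
  refine h3d.false_of_tendsto hU (u := fun g => (p, z g, ρ g⁻¹ u)) (p := (p, ζ, s))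
    (p' := (r, ω, u)) ⟨hp.1.1, hp.1.2, hζs⟩ ⟨hωr.symm, Ne.symm hu.1.1, Ne.symm hu.1.2⟩
    (tendsto_const_nhds.prodMk_nhds (hζ.prodMk_nhds hu.2)) ?_
  simp only [hρ.apply_inv_apply]
  exact hp.2.prodMk_nhds (hω.prodMk_nhds tendsto_const_nhds)

/-- An ultrafilter of cofinite type on the linking elements `g` has attracting and repelling
points `r`, `s`; once `g` maps the complement of a `b`-small neighbourhood of `s` into an
`a`-small neighbourhood of `r`, the entourages `a` and `g b` are unlinked. -/
theorem ThreeDisc.finite_setOf_entLinked (h3d : ThreeDisc fun (g : G) (x : T) => ρ g x)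
    (h3 : HasThreePts T) (hρ : IsTopAction G T ρ) (a b : Entourage T) :
    {g : G | EntLinked a (entMap (ρ g) b)}.Finite := by
  refine Set.not_infinite.1 fun hH => ?_
  have : Infinite T := by
    refine not_finite_iff_infinite.1 fun _ => ?_
    have : Finite G := h3d.finite_of_finite h3
    exact hH (toFinite _)
  have := hH.cofinite_inf_principal_neBot
  let 𝒰 := Ultrafilter.of (cofinite ⊓ 𝓟 {g : G | EntLinked a (entMap (ρ g) b)})
  obtain ⟨r, s, hrs⟩ :=
    h3d.exists_eventually_mapsTo hρ ((Ultrafilter.of_le _).trans inf_le_left : (𝒰 : Filter G) ≤ _)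
  obtain ⟨V, hV, hVa⟩ := a.exists_mem_nhds_eSmall r
  obtain ⟨W, hW, hWb⟩ := b.exists_mem_nhds_eSmall s
  have hlinked : ∀ᶠ g in (𝒰 : Filter G), EntLinked a (entMap (ρ g) b) :=
    (Ultrafilter.of_le _).trans inf_le_right (mem_principal_self _)
  obtain ⟨g, hg, hgVW⟩ := (hlinked.and (hrs V hV W hW)).exists
  exact hg (entUnlinked_entMap_of_mapsTo hVa hWb hgVW)

end Dynkin

section Generation

variable [Group G]

def linkingSet (ρ : G → T ≃ₜ T) (F : Set (Entourage T)) : Set G :=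
  {g | ∃ f ∈ F, ∃ f' ∈ F, EntLinked f (entMap (ρ g) f')}

lemma ThreeDisc.finite_linkingSet [CompactSpace T] [T2Space T]
    (h3d : ThreeDisc fun (g : G) (x : T) => ρ g x) (h3 : HasThreePts T)
    (hρ : IsTopAction G T ρ) {F : Set (Entourage T)} (hF : F.Finite) :
    (linkingSet ρ F).Finite :=
  (hF.biUnion fun f _ => hF.biUnion fun f' _ => h3d.finite_setOf_entLinked h3 hρ f f').subset
    fun _ ⟨_, hf, _, hf', h⟩ => mem_biUnion hf (mem_biUnion hf' h)

lemma IsTopAction.closure_linkingSet_eq_top (hρ : IsTopAction G T ρ)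
    {A F : Set (Entourage T)} (hinv : ∀ g : G, ∀ a ∈ A, entMap (ρ g) a ∈ A) (hFA : F ⊆ A)
    (hA : ∀ a ∈ A, ∃ g : G, ∃ b ∈ F, a = entMap (ρ g) b) (hF : ∀ f ∈ F, EntLinked f f)
    (hne : F.Nonempty) (hconn : ∀ a ∈ A, ∀ b ∈ A, ∃ n : ℕ, AdistLE A n a b) :
    Subgroup.closure (linkingSet ρ F) = ⊤ := by
  set H := Subgroup.closure (linkingSet ρ F)
  obtain ⟨f₀, hf₀⟩ := hne
  refine eq_top_iff.2 fun g _ => ?_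
  obtain ⟨n, hn⟩ := hconn f₀ (hFA hf₀) _ (hinv g f₀ (hFA hf₀))
  -- along the path, every way of writing the current vertex as `g f` has `g ∈ H`
  refine hn.induction (P := fun c => ∀ g : G, ∀ f ∈ F, c = entMap (ρ g) f → g ∈ H)
    ?_ ?_ g f₀ hf₀ rfl
  · rintro g f hf rfl
    exact Subgroup.subset_closure ⟨_, hf₀, f, hf, hF _ hf₀⟩
  · rintro b _ hb - hbc hPb g' f' hf' rfl
    obtain ⟨h, f, hf, rfl⟩ := hA b hb
    have hlink : EntLinked f (entMap (ρ (h⁻¹ * g')) f') := by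
      simpa only [hρ.entMap_mul, inv_mul_cancel, hρ.entMap_one] using
        (entLinked_entMap_iff (φ := ρ h⁻¹)).2 hbc
    simpa using H.mul_mem (hPb h f hf rfl) (Subgroup.subset_closure ⟨f, hf, f', hf', hlink⟩)

end Generation

end RHG

namespace RHG

theorem finitely_generated_iff_connected_entourage_graph_general {G : Type*} [Group G]
    {T : Type*} [TopologicalSpace T] [CompactSpace T] [T2Space T] (h3 : HasThreePts T)
    (ρ : G → T ≃ₜ T) (hρ : IsTopAction G T ρ)
    (h3d : ThreeDisc fun (g : G) (x : T) => ρ g x) :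
    Group.FG G ↔
      ∃ A : Set (Entourage T), A.Nonempty ∧
        (∀ a ∈ A, GoodEnt a) ∧
        (∀ g : G, ∀ a ∈ A, entMap (ρ g) a ∈ A) ∧
        (∃ F : Set (Entourage T), F.Finite ∧ F ⊆ A ∧
          ∀ a ∈ A, ∃ g : G, ∃ b ∈ F, a = entMap (ρ g) b) ∧
        (∀ a ∈ A, ∀ b ∈ A, ∃ n : ℕ, AdistLE A n a b) := by
  refine ⟨exists_connected_of_fg h3 hρ, ?_⟩
  rintro ⟨A, ⟨a, ha⟩, hgood, hinv, ⟨F, hF, hFA, hA⟩, hconn⟩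
  obtain ⟨-, f, hf, -⟩ := hA a ha
  exact Group.fg_iff.2 ⟨linkingSet ρ F,
    hρ.closure_linkingSet_eq_top hinv hFA hA (fun f hf => (hgood f (hFA hf)).1) ⟨f, hf⟩ hconn,
    h3d.finite_linkingSet h3 hρ hF⟩

/-- Let `G` act 3-discontinuously and 2-cocompactly on a compactum `T`. Then `G` is
finitely generated if and only if there exists a nonempty `G`-finite (`G`-invariant) set
`A` of entourages of `T` whose graph of entourages `Γ_A` is connected. -/
theorem finitely_generated_iff_connected_entourage_graph {G : Type*} [Group G]
    {T : Type*} [TopologicalSpace T] [CompactSpace T] [T2Space T] (h3 : HasThreePts T)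
    (ρ : G → T ≃ₜ T) (hρ : IsTopAction G T ρ)
    (h3d : ThreeDisc fun (g : G) (x : T) => ρ g x)
    (h2c : TwoCocompact fun (g : G) (x : T) => ρ g x) :
    Group.FG G ↔
      ∃ A : Set (Entourage T), A.Nonempty ∧
        (∀ a ∈ A, GoodEnt a) ∧
        (∀ g : G, ∀ a ∈ A, entMap (ρ g) a ∈ A) ∧
        (∃ F : Set (Entourage T), F.Finite ∧ F ⊆ A ∧
          ∀ a ∈ A, ∃ g : G, ∃ b ∈ F, a = entMap (ρ g) b) ∧
        (∀ a ∈ A, ∀ b ∈ A, ∃ n : ℕ, AdistLE A n a b) :=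
  finitely_generated_iff_connected_entourage_graph_general h3 ρ hρ h3d

end RHG
end

section
/- Let T be a compactum and A a discrete G-finite set of entourages of T. Then the space T̃ = T ⊔ A, equipped with the topology generated by the singletons {e} for e ∈ A together with the convex hulls õ = o ∪ {e ∈ A : the complement of o is e-small} of open subsets o ⊆ T, is a compactum (i.e., compact and Hausdorff). -/
namespace RHG

/-! The hulls `tildeHull A o` of open `o ∋ p` form a neighbourhood base at `p ∈ T`, and `T`
embeds continuously, so `T` is a compact subset of `T̃`. If `U ⊇ T` is open, cover `T` by open
sets whose hulls lie in `U` and take a Lebesgue entourage `w` of this cover: an `e ∈ A` unlinked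
with `w` splits `T` into an `e`-small set and a `w`-small one, the latter inside a member `o` of
the cover, so `oᶜ` is `e`-small and `e ∈ tildeHull A o ⊆ U`. By discreteness only finitely many
`e` are linked with `w`, hence `U` misses only finitely many points and `T̃` is compact.
For the Hausdorff property, a common element `e` of the hulls of disjoint `u` and `v` would make
`T = uᶜ ∪ vᶜ` a splitting into `e`-small sets, contradicting that `e` is self-linked. -/

section

open Set

theorem compactSpace_of_isCompact_of_finite_compl {X : Type*} [TopologicalSpace X] {K : Set X}
    (hK : IsCompact K) (h : ∀ U, IsOpen U → K ⊆ U → Uᶜ.Finite) : CompactSpace X := by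
  classical
  refine ⟨isCompact_of_finite_subcover fun U hUo hcov => ?_⟩
  obtain ⟨t, ht⟩ := hK.elim_finite_subcover U hUo ((subset_univ K).trans hcov)
  have hfin := h _ (isOpen_biUnion fun i _ => hUo i) ht
  choose j hj using fun x => mem_iUnion.1 (hcov (mem_univ x))
  refine ⟨t ∪ (hfin.image j).toFinset, fun x _ => ?_⟩
  simp only [Finset.mem_union, Finite.mem_toFinset, mem_iUnion, exists_prop]
  by_cases hx : x ∈ ⋃ i ∈ t, U i
  · obtain ⟨i, hi, hxi⟩ := mem_iUnion₂.1 hx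
    exact ⟨i, Or.inl hi, hxi⟩
  · exact ⟨j x, Or.inr (mem_image_of_mem j hx), hj x⟩

variable {T : Type*} [TopologicalSpace T]

theorem eSmall.mono_s8 {e : Entourage T} {s t : Set T} (ht : eSmall e t) (h : s ⊆ t) :
    eSmall e s := fun x hx y hy => ht x (h hx) y (h hy)

theorem exists_entourage_forall_eSmall_subset [CompactSpace T] [R1Space T]
    {ι : Type*} [Nonempty ι] {o : ι → Set T} (ho : ∀ i, IsOpen (o i)) (hc : ⋃ i, o i = univ) :
    ∃ w : Entourage T, ∀ s, eSmall w s → ∃ i, s ⊆ o i := by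
  let _ : UniformSpace T := uniformSpaceOfCompactR1
  obtain ⟨V, hV, hball⟩ := lebesgue_number_lemma isCompact_univ ho hc.ge
  have hVswap : Prod.swap ⁻¹' V ∈ uniformity T := tendsto_swap_uniformity hV
  refine ⟨⟨V ∩ Prod.swap ⁻¹' V, fun x y h => ⟨h.2, h.1⟩,
    fun x => Filter.inter_mem (nhds_le_uniformity x hV) (nhds_le_uniformity x hVswap)⟩, ?_⟩
  intro s hs
  rcases s.eq_empty_or_nonempty with rfl | ⟨x, hx⟩
  · exact ⟨Classical.arbitrary ι, empty_subset _⟩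
  · obtain ⟨i, hi⟩ := hball x trivial
    exact ⟨i, fun y hy => hi (hs x hx y hy).1⟩

theorem EntLinked.exists_isOpen_not_eSmall_compl [T1Space T] {e : Entourage T}
    (he : EntLinked e e) (p : T) : ∃ o : Set T, IsOpen o ∧ p ∈ o ∧ ¬ eSmall e oᶜ := by
  -- `{p}` is `e`-small, so self-linkedness forbids `{p}ᶜ` to be `e`-small.
  have hp : eSmall e {p} := fun x hx y hy => by
    rw [mem_singleton_iff.1 hx, mem_singleton_iff.1 hy]
    exact mem_of_mem_nhds (e.mem_nhds' p)
  have : ¬ eSmall e {p}ᶜ := fun h => he ⟨{p}, {p}ᶜ, hp, h, union_compl_self _⟩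
  obtain ⟨x, hx, z, hz, hxz⟩ : ∃ x ∈ ({p}ᶜ : Set T), ∃ z ∈ ({p}ᶜ : Set T), (x, z) ∉ e.carrier := by
    simpa [eSmall] using this
  refine ⟨{x, z}ᶜ, (Finite.isClosed (by simp)).isOpen_compl, ?_, fun h => hxz ?_⟩
  · simp_all [eq_comm]
  · exact h x (by simp) z (by simp)

def tildeHull (A : Set (Entourage T)) (o : Set T) : Set (T ⊕ ↥A) :=
  Sum.inl '' o ∪ Sum.inr '' {e : ↥A | eSmall (↑e) oᶜ}

section TildeTopology

local instance (A : Set (Entourage T)) : TopologicalSpace (T ⊕ ↥A) := tildeTop A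

variable {A : Set (Entourage T)} {o : Set T}

@[simp]
theorem inl_mem_tildeHull {p : T} : Sum.inl p ∈ tildeHull A o ↔ p ∈ o := by
  simp [tildeHull]

@[simp]
theorem inr_mem_tildeHull {e : ↥A} : Sum.inr e ∈ tildeHull A o ↔ eSmall (↑e) oᶜ := by
  simp [tildeHull]

theorem isOpen_tildeHull (ho : IsOpen o) : IsOpen (tildeHull A o) :=
  TopologicalSpace.isOpen_generateFrom_of_mem (Or.inr ⟨o, ho, rfl⟩)

theorem isOpen_singleton_inr (e : ↥A) : IsOpen ({Sum.inr e} : Set (T ⊕ ↥A)) :=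
  TopologicalSpace.isOpen_generateFrom_of_mem (Or.inl ⟨e, rfl⟩)

theorem tildeHull_inter_subset (o₁ o₂ : Set T) :
    tildeHull A (o₁ ∩ o₂) ⊆ tildeHull A o₁ ∩ tildeHull A o₂ := by
  rintro (p | e) h
  · simp_all
  · simp only [inr_mem_tildeHull, mem_inter_iff] at h ⊢
    exact ⟨h.mono_s8 (by gcongr; exact inter_subset_left),
      h.mono_s8 (by gcongr; exact inter_subset_right)⟩

theorem IsOpen.exists_tildeHull_subset {U : Set (T ⊕ ↥A)} (hU : IsOpen U) {p : T}
    (hp : Sum.inl p ∈ U) : ∃ o : Set T, IsOpen o ∧ p ∈ o ∧ tildeHull A o ⊆ U := by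
  induction hU generalizing p with
  | basic s hs =>
    rcases hs with ⟨e, rfl⟩ | ⟨o, ho, rfl⟩
    · simp at hp
    · exact ⟨o, ho, by simpa using hp, subset_rfl⟩
  | univ => exact ⟨univ, isOpen_univ, trivial, subset_univ _⟩
  | inter s t _ _ ihs iht =>
    obtain ⟨o₁, ho₁, hp₁, hs₁⟩ := ihs hp.1
    obtain ⟨o₂, ho₂, hp₂, hs₂⟩ := iht hp.2
    exact ⟨o₁ ∩ o₂, ho₁.inter ho₂, ⟨hp₁, hp₂⟩,
      (tildeHull_inter_subset o₁ o₂).trans (inter_subset_inter hs₁ hs₂)⟩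
  | sUnion S _ ih =>
    obtain ⟨s, hsS, hps⟩ := hp
    obtain ⟨o, ho, hpo, hso⟩ := ih s hsS hps
    exact ⟨o, ho, hpo, hso.trans (subset_sUnion_of_mem hsS)⟩

theorem continuous_inl_tildeTop : Continuous (Sum.inl : T → T ⊕ ↥A) := by
  refine continuous_generateFrom_iff.2 ?_
  rintro s (⟨e, rfl⟩ | ⟨o, ho, rfl⟩)
  · rw [← image_singleton, preimage_inl_image_inr]
    exact isOpen_empty
  · rw [preimage_union, preimage_image_eq _ Sum.inl_injective, preimage_inl_image_inr,
      union_empty]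
    exact ho

theorem finite_setOf_inr_notMem [CompactSpace T] [R1Space T] [Nonempty T]
    (hdisc : DiscreteEnts A) {U : Set (T ⊕ ↥A)} (hU : IsOpen U) (hTU : range Sum.inl ⊆ U) :
    {e : ↥A | Sum.inr e ∉ U}.Finite := by
  choose o ho hpo hoU using fun p => IsOpen.exists_tildeHull_subset hU (hTU (mem_range_self p))
  obtain ⟨w, hw⟩ := exists_entourage_forall_eSmall_subset ho
    (eq_univ_of_forall fun p => mem_iUnion.2 ⟨p, hpo p⟩)
  refine ((hdisc w).preimage Subtype.val_injective.injOn).subset fun e he => ⟨e.2, ?_⟩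
  rintro ⟨sa, sb, hsa, hsb, hcover⟩
  obtain ⟨p, hp⟩ := hw sb hsb
  have hcompl : (o p)ᶜ ⊆ sa := fun x hx =>
    (hcover.ge (mem_univ x)).resolve_right fun h => hx (hp h)
  exact he (hoU p (inr_mem_tildeHull.2 (hsa.mono_s8 hcompl)))

theorem compactSpace_tildeTop [CompactSpace T] [R1Space T] [Nonempty T]
    (hdisc : DiscreteEnts A) : CompactSpace (T ⊕ ↥A) :=
  compactSpace_of_isCompact_of_finite_compl (isCompact_range continuous_inl_tildeTop)
    fun U hU hTU => ((finite_setOf_inr_notMem hdisc hU hTU).image Sum.inr).subset <| by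
      rintro (p | e) hx
      · exact absurd (hTU (mem_range_self p)) hx
      · exact mem_image_of_mem _ hx

theorem disjoint_tildeHull (hA : ∀ e ∈ A, EntLinked e e) {u v : Set T} (huv : Disjoint u v) :
    Disjoint (tildeHull A u) (tildeHull A v) := by
  rw [disjoint_left]
  rintro (p | e) hu hv
  · rw [inl_mem_tildeHull] at hu hv
    exact disjoint_left.1 huv hu hv
  · rw [inr_mem_tildeHull] at hu hv
    exact hA e e.2 ⟨uᶜ, vᶜ, hu, hv, by rw [← compl_inter, huv.inter_eq, compl_empty]⟩

theorem exists_isOpen_separating_inl_inr [T1Space T] {e : ↥A} (he : EntLinked e.1 e.1) (p : T) :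
    ∃ U V : Set (T ⊕ ↥A), IsOpen U ∧ IsOpen V ∧ Sum.inl p ∈ U ∧ Sum.inr e ∈ V ∧ Disjoint U V := by
  obtain ⟨o, ho, hpo, hno⟩ := he.exists_isOpen_not_eSmall_compl p
  refine ⟨tildeHull A o, {Sum.inr e}, isOpen_tildeHull ho, isOpen_singleton_inr e,
    inl_mem_tildeHull.2 hpo, rfl, disjoint_singleton_right.2 fun h => hno (inr_mem_tildeHull.1 h)⟩

theorem t2Space_tildeTop [T2Space T] (hA : ∀ e ∈ A, EntLinked e e) : T2Space (T ⊕ ↥A) := by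
  refine ⟨?_⟩
  rintro (p | e) (q | f) hne
  · obtain ⟨u, v, hu, hv, hpu, hqv, huv⟩ := t2_separation (Sum.inl_injective.ne_iff.1 hne)
    exact ⟨_, _, isOpen_tildeHull hu, isOpen_tildeHull hv, inl_mem_tildeHull.2 hpu,
      inl_mem_tildeHull.2 hqv, disjoint_tildeHull hA huv⟩
  · exact exists_isOpen_separating_inl_inr (hA f f.2) p
  · obtain ⟨U, V, hU, hV, hqU, heV, hUV⟩ := exists_isOpen_separating_inl_inr (hA e e.2) q
    exact ⟨V, U, hV, hU, heV, hqU, hUV.symm⟩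
  · exact ⟨_, _, isOpen_singleton_inr e, isOpen_singleton_inr f, rfl, rfl,
      disjoint_singleton.2 hne⟩

end TildeTopology

end

theorem tilde_is_compactum_general
    {T : Type*} [TopologicalSpace T] [CompactSpace T] [T2Space T] (h3 : HasThreePts T)
    (A : Set (Entourage T))
    (hgood : ∀ a ∈ A, GoodEnt a)
    (hdisc : DiscreteEnts A) :
    @CompactSpace (T ⊕ ↥A) (tildeTop A) ∧ @T2Space (T ⊕ ↥A) (tildeTop A) := by
  obtain ⟨x, -⟩ := h3
  have : Nonempty T := ⟨x⟩
  exact ⟨compactSpace_tildeTop hdisc, t2Space_tildeTop fun a ha => (hgood a ha).1⟩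

/-- Let `T` be a compactum and `A` a discrete `G`-finite set of entourages of `T`. Then
`T̃ = T ⊔ A`, with the topology generated by the singletons of elements of `A` and the
convex hulls of open subsets of `T`, is a compactum (compact and Hausdorff). -/
theorem tilde_is_compactum {G : Type*} [Group G]
    {T : Type*} [TopologicalSpace T] [CompactSpace T] [T2Space T] (h3 : HasThreePts T)
    (ρ : G → T ≃ₜ T) (hρ : IsTopAction G T ρ)
    (A : Set (Entourage T))
    (hgood : ∀ a ∈ A, GoodEnt a)
    (hdisc : DiscreteEnts A)
    (hinv : ∀ g : G, ∀ a ∈ A, entMap (ρ g) a ∈ A)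
    (hGfin : ∃ F : Set (Entourage T), F.Finite ∧ F ⊆ A ∧
      ∀ a ∈ A, ∃ g : G, ∃ b ∈ F, a = entMap (ρ g) b) :
    @CompactSpace (T ⊕ ↥A) (tildeTop A) ∧ @T2Space (T ⊕ ↥A) (tildeTop A) :=
  tilde_is_compactum_general h3 A hgood hdisc

end RHG
end
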